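/- Let the constraint value be C = 1/2 and restrict the bounded measurable game to strategies supported in [0, 1]. A strategy f with mca(f) ≤ 1/2 satisfies wp(f; g) ≥ 0 for every strategy g supported in [0, 1] with mca(g) ≤ 1/2 if and only if f is almost everywhere equal to a positive constant on [0, 1]. Consequently every equilibrium point of this game is comprised of strategies that are almost everywhere positive constants on [0, 1], and conversely any tuple of such strategies is an equilibrium point. -/

import Mathlib

open MeasureTheory Set

/-- Mean competitive ability of a function supported in `[0, ∞)`:
`mca f = (∫₀^∞ t f(t) dt) / (∫₀^∞ f(t) dt)`. -/
noncomputable def mca (f : ℝ → ℝ) : ℝ :=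
  (∫ t in Ioi (0:ℝ), t * f t) / (∫ t in Ioi (0:ℝ), f t)

/-- Payoff of `f` against `g`:
`wp f g = ∫₀^∞ f(x) (∫₀ˣ g(t) dt − ∫ₓ^∞ g(t) dt) dx`. -/
noncomputable def wp (f g : ℝ → ℝ) : ℝ :=
  ∫ x in Ioi (0:ℝ), f x * ((∫ t in Ioc (0:ℝ) x, g t) - ∫ t in Ioi x, g t)

/-- A bounded measurable strategy: measurable, bounded, nonnegative, compactly
supported in `[0, ∞)`, and not almost everywhere zero. -/
def IsStrategy (f : ℝ → ℝ) : Prop :=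
  Measurable f ∧ (∃ Cb : ℝ, ∀ x, f x ≤ Cb) ∧ (∀ x, 0 ≤ f x) ∧
  (∃ R : ℝ, Function.support f ⊆ Icc 0 R) ∧ ¬ f =ᵐ[volume] (0 : ℝ → ℝ)

/-!
Write `F = prim f` and `T = F 1 = mass f`. On `[0, 1]`, `wp f g = ∫ f (2 G - G 1)`, and integration
by parts for the absolutely continuous primitives gives `wp f g = -wp g f`. Against a strategy
equal to a constant `c` on `[0, 1]`, a strategy `h` earns `c (2 moment h - mass h)`, which is
`≤ 0` exactly when `mca h ≤ 1/2`; this gives both "if" directions.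

Conversely, if `wp f g ≥ 0` for every admissible `g`, then `∫₀¹ k ψ ≤ 0` for `ψ = 2 F - T` and
every continuous density `k > 0` with mean at most `1/2`. The uniform density forces `∫₀¹ ψ = 0`;
perturbing it to `1 ± ε h` shows that `ψ` is orthogonal to every `h ⊥ (2 x - 1)`, so `ψ` is a
multiple of `2 x - 1`. Evaluating at `1` gives `F x = T x`, i.e. `f = T` a.e. In an equilibrium,
testing `2 f_k` and `f_k / 2` shows `wp f_k S_k = 0` for the sum `S_k` of the opponents, so each
`S_k`, and hence each `f_k`, is a.e. constant.
-/

noncomputable def prim (f : ℝ → ℝ) (x : ℝ) : ℝ := ∫ t in (0:ℝ)..x, f t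

noncomputable def mass (f : ℝ → ℝ) : ℝ := ∫ t in Ioi (0:ℝ), f t

noncomputable def moment (f : ℝ → ℝ) : ℝ := ∫ t in Ioi (0:ℝ), t * f t

def Admissible (f : ℝ → ℝ) : Prop :=
  IsStrategy f ∧ Function.support f ⊆ Icc 0 1 ∧ mca f ≤ 1 / 2

def othersSum {ι : Type*} [Fintype ι] [DecidableEq ι] (f : ι → ℝ → ℝ) (k : ι) : ℝ → ℝ :=
  fun x => ∑ ℓ ∈ Finset.univ.erase k, f ℓ x

def IsEquilibrium {ι : Type*} [Fintype ι] [DecidableEq ι] (f : ι → ℝ → ℝ) : Prop :=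
  ∀ k g, Admissible g → wp g (othersSum f k) ≤ wp (f k) (othersSum f k)

variable {f g h : ℝ → ℝ}

lemma setIntegral_Ioi_eq_intervalIntegral (hs : Function.support h ⊆ Icc 0 1) :
    ∫ t in Ioi (0:ℝ), h t = ∫ t in (0:ℝ)..1, h t := by
  rw [intervalIntegral.integral_of_le zero_le_one]
  refine setIntegral_eq_of_subset_of_forall_sdiff_eq_zero measurableSet_Ioi Ioc_subset_Ioi_self
    fun x hx => Function.notMem_support.1 fun hx' => hx.2 ⟨hx.1, (hs hx').2⟩

lemma mass_eq_prim_one (hs : Function.support f ⊆ Icc 0 1) : mass f = prim f 1 :=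
  setIntegral_Ioi_eq_intervalIntegral hs

lemma moment_eq_intervalIntegral (hs : Function.support f ⊆ Icc 0 1) :
    moment f = ∫ t in (0:ℝ)..1, t * f t :=
  setIntegral_Ioi_eq_intervalIntegral ((Function.support_mul_subset_right _ _).trans hs)

lemma IsStrategy.integrable (hf : IsStrategy f) : Integrable f := by
  obtain ⟨hm, ⟨C, hC⟩, hnn, ⟨R, hR⟩, -⟩ := hf
  refine (integrableOn_iff_integrable_of_support_subset hR).1 <|
    Measure.integrableOn_of_bounded (M := C) measure_Icc_lt_top.ne hm.aestronglyMeasurable ?_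
  exact ae_of_all _ fun x => by rw [Real.norm_of_nonneg (hnn x)]; exact hC x

lemma IsStrategy.integrable_id_mul (hf : IsStrategy f) : Integrable fun t => t * f t := by
  obtain ⟨R, hR⟩ := hf.2.2.2.1
  refine (integrableOn_iff_integrable_of_support_subset
    ((Function.support_mul_subset_right _ _).trans hR)).1 ?_
  exact (hf.integrable.integrableOn).continuousOn_mul continuousOn_id isCompact_Icc

lemma IsStrategy.mass_pos (hf : IsStrategy f) : 0 < mass f := by
  have hint := hf.integrable
  obtain ⟨-, -, hnn, ⟨R, hR⟩, hne⟩ := hf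
  have hmass : mass f = ∫ t, f t := by
    rw [mass, ← integral_Ici_eq_integral_Ioi]
    exact setIntegral_eq_integral_of_forall_compl_eq_zero fun x hx =>
      Function.notMem_support.1 fun hx' => hx (hR hx').1
  rw [hmass]
  exact (integral_nonneg hnn).lt_of_ne fun h0 =>
    hne ((integral_eq_zero_iff_of_nonneg hnn hint).1 h0.symm)

lemma IsStrategy.mca_le_half_iff (hf : IsStrategy f) : mca f ≤ 1 / 2 ↔ 2 * moment f ≤ mass f := by
  change moment f / mass f ≤ 1 / 2 ↔ _
  rw [div_le_iff₀ hf.mass_pos]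
  constructor <;> intro h <;> linarith

lemma continuous_prim (hf : Integrable f) : Continuous (prim f) :=
  intervalIntegral.continuous_primitive (fun _ _ => hf.intervalIntegrable) 0

lemma wp_eq_intervalIntegral (hf : Function.support f ⊆ Icc 0 1) (hg : Integrable g) :
    wp f g = ∫ x in (0:ℝ)..1, f x * (2 * prim g x - mass g) := by
  rw [wp, setIntegral_Ioi_eq_intervalIntegral ((Function.support_mul_subset_left _ _).trans hf)]
  refine intervalIntegral.integral_congr fun x hx => ?_
  rw [uIcc_of_le zero_le_one] at hx
  have hsplit : mass g = (∫ t in Ioc (0:ℝ) x, g t) + ∫ t in Ioi x, g t := by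
    rw [mass, ← Ioc_union_Ioi_eq_Ioi hx.1, setIntegral_union (Ioc_disjoint_Ioi le_rfl)
      measurableSet_Ioi hg.integrableOn hg.integrableOn]
  simp only [prim, intervalIntegral.integral_of_le hx.1, hsplit]
  ring

lemma integral_mul_prim_add_prim_mul {b : ℝ} (hf : IntervalIntegrable f volume 0 b)
    (hg : IntervalIntegrable g volume 0 b) :
    ∫ x in (0:ℝ)..b, (f x * prim g x + prim f x * g x) = prim f b * prim g b := by
  have hF := hf.absolutelyContinuousOnInterval_intervalIntegral left_mem_uIcc
  have hG := hg.absolutelyContinuousOnInterval_intervalIntegral left_mem_uIcc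
  have hparts := hF.integral_deriv_mul_eq_sub hG
  simp only [intervalIntegral.integral_same, mul_zero, sub_zero] at hparts
  simp only [prim]
  rw [← hparts]
  refine intervalIntegral.integral_congr_ae ?_
  filter_upwards [hf.ae_hasDerivAt_integral, hg.ae_hasDerivAt_integral] with x hfx hgx hx
  have hx' := uIoc_subset_uIcc hx
  rw [(hfx hx' 0 left_mem_uIcc).deriv, (hgx hx' 0 left_mem_uIcc).deriv]

lemma wp_eq_neg_wp (hf : Integrable f) (hfs : Function.support f ⊆ Icc 0 1) (hg : Integrable g)
    (hgs : Function.support g ⊆ Icc 0 1) : wp f g = -wp g f := by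
  have hfi : IntervalIntegrable f volume 0 1 := hf.intervalIntegrable
  have hgi : IntervalIntegrable g volume 0 1 := hg.intervalIntegrable
  have hF := (continuous_prim hf).continuousOn (s := uIcc 0 1)
  have hG := (continuous_prim hg).continuousOn (s := uIcc 0 1)
  have hsum : ∫ x in (0:ℝ)..1, (f x * (2 * prim g x - prim g 1) + g x * (2 * prim f x - prim f 1))
      = 2 * (∫ x in (0:ℝ)..1, (f x * prim g x + prim f x * g x))
        - (prim g 1 * (∫ x in (0:ℝ)..1, f x) + prim f 1 * ∫ x in (0:ℝ)..1, g x) := by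
    rw [← intervalIntegral.integral_const_mul, ← intervalIntegral.integral_const_mul,
      ← intervalIntegral.integral_const_mul, ← intervalIntegral.integral_add
        (hfi.const_mul _) (hgi.const_mul _),
      ← intervalIntegral.integral_sub (((hfi.mul_continuousOn hG).add
        (hgi.continuousOn_mul hF)).const_mul 2) ((hfi.const_mul _).add (hgi.const_mul _))]
    congr 1; ext x; ring
  rw [wp_eq_intervalIntegral hfs hg, wp_eq_intervalIntegral hgs hf, mass_eq_prim_one hfs,
    mass_eq_prim_one hgs, eq_neg_iff_add_eq_zero,
    ← intervalIntegral.integral_add (hfi.mul_continuousOn (by fun_prop)) (hgi.mul_continuousOn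
      (by fun_prop)), hsum, integral_mul_prim_add_prim_mul hfi hgi]
  simp only [prim]
  ring

lemma prim_eq_mul_of_ae_eq {c : ℝ} (hfc : ∀ᵐ x ∂(volume.restrict (Icc (0:ℝ) 1)), f x = c) :
    ∀ x ∈ Icc (0:ℝ) 1, prim f x = c * x := by
  intro x hx
  rw [ae_restrict_iff' measurableSet_Icc] at hfc
  have hfx : ∫ t in (0:ℝ)..x, f t = ∫ t in (0:ℝ)..x, c := by
    refine intervalIntegral.integral_congr_ae (hfc.mono fun t ht ht' => ht ?_)
    rw [uIoc_of_le hx.1] at ht'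
    exact ⟨ht'.1.le, ht'.2.trans hx.2⟩
  rw [prim, hfx, intervalIntegral.integral_const, smul_eq_mul, sub_zero, mul_comm]

lemma ae_eq_of_prim_eq_mul {c : ℝ} (hf : IntervalIntegrable f volume 0 1)
    (hprim : ∀ x ∈ Ioo (0:ℝ) 1, prim f x = c * x) :
    ∀ᵐ x ∂(volume.restrict (Icc (0:ℝ) 1)), f x = c := by
  rw [ae_restrict_iff' measurableSet_Icc]
  have hne : ∀ a : ℝ, ∀ᵐ x, x ≠ a := fun a => by simp [ae_iff, measure_singleton]
  filter_upwards [hf.ae_hasDerivAt_integral, hne 0, hne 1] with x hderiv hx0 hx1 hx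
  have hx' : x ∈ Ioo (0:ℝ) 1 := ⟨hx.1.lt_of_ne' hx0, hx.2.lt_of_ne hx1⟩
  have hlin : HasDerivAt (prim f) (c * 1) x :=
    ((hasDerivAt_id x).const_mul c).congr_of_eventuallyEq
      (Filter.eventually_of_mem (isOpen_Ioo.mem_nhds hx') hprim)
  rw [← mul_one c]
  exact (hderiv (by rwa [uIcc_of_le zero_le_one]) 0 left_mem_uIcc).unique hlin

lemma wp_eq_of_prim_eq_mul {S : ℝ → ℝ} {c : ℝ} (hh : Integrable h)
    (hhs : Function.support h ⊆ Icc 0 1) (hS : Integrable S) (hSs : Function.support S ⊆ Icc 0 1)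
    (hprim : ∀ x ∈ Icc (0:ℝ) 1, prim S x = c * x) :
    wp h S = c * (2 * moment h - mass h) := by
  have hhi : IntervalIntegrable h volume 0 1 := hh.intervalIntegrable
  have hxh : IntervalIntegrable (fun x => x * h x) volume 0 1 :=
    hhi.continuousOn_mul continuousOn_id
  rw [wp_eq_intervalIntegral hhs hS, mass_eq_prim_one hSs, hprim 1 ⟨zero_le_one, le_rfl⟩,
    moment_eq_intervalIntegral hhs, mass_eq_prim_one hhs, prim,
    ← intervalIntegral.integral_const_mul, ← intervalIntegral.integral_sub (hxh.const_mul 2) hhi,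
    ← intervalIntegral.integral_const_mul]
  refine intervalIntegral.integral_congr fun x hx => ?_
  rw [uIcc_of_le zero_le_one] at hx
  simp only [hprim x hx]
  ring

lemma wp_nonneg_of_ae_eq_const {c : ℝ} (hf : Integrable f) (hfs : Function.support f ⊆ Icc 0 1)
    (hc : 0 ≤ c) (hfc : ∀ᵐ x ∂(volume.restrict (Icc (0:ℝ) 1)), f x = c) (hg : Admissible g) :
    0 ≤ wp f g := by
  obtain ⟨hgS, hgs, hgm⟩ := hg
  rw [wp_eq_neg_wp hf hfs hgS.integrable hgs,
    wp_eq_of_prim_eq_mul hgS.integrable hgs hf hfs (prim_eq_mul_of_ae_eq hfc)]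
  have := hgS.mca_le_half_iff.1 hgm
  nlinarith

section Indicator

variable {k : ℝ → ℝ}

lemma intervalIntegral_comp_indicator_Icc (F : ℝ → ℝ → ℝ) :
    ∫ x in (0:ℝ)..1, F x ((Icc 0 1).indicator k x) = ∫ x in (0:ℝ)..1, F x (k x) :=
  intervalIntegral.integral_congr fun x hx => by
    rw [uIcc_of_le zero_le_one] at hx
    simp only [indicator_of_mem hx]

lemma wp_indicator_Icc (hf : Integrable f) :
    wp ((Icc 0 1).indicator k) f = ∫ x in (0:ℝ)..1, k x * (2 * prim f x - mass f) := by
  rw [wp_eq_intervalIntegral support_indicator_subset hf,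
    intervalIntegral_comp_indicator_Icc fun x y => y * (2 * prim f x - mass f)]

lemma admissible_indicator_Icc (hk : Continuous k) (hpos : ∀ x ∈ Icc (0:ℝ) 1, 0 < k x)
    (hmean : ∫ x in (0:ℝ)..1, (2 * x - 1) * k x ≤ 0) : Admissible ((Icc 0 1).indicator k) := by
  set g := (Icc (0:ℝ) 1).indicator k
  have hgs : Function.support g ⊆ Icc 0 1 := support_indicator_subset
  have hmass : mass g = ∫ x in (0:ℝ)..1, k x := by
    rw [mass_eq_prim_one hgs, prim, intervalIntegral_comp_indicator_Icc fun _ y => y]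
  have hmoment : moment g = ∫ x in (0:ℝ)..1, x * k x := by
    rw [moment_eq_intervalIntegral hgs, intervalIntegral_comp_indicator_Icc fun x y => x * y]
  have hmass_pos : 0 < mass g := hmass ▸ intervalIntegral.intervalIntegral_pos_of_pos_on
    (hk.intervalIntegrable 0 1) (fun x hx => hpos x (Ioo_subset_Icc_self hx)) zero_lt_one
  obtain ⟨M, hM⟩ := isCompact_Icc.exists_bound_of_continuousOn (hk.continuousOn (s := Icc 0 1))
  have hstrat : IsStrategy g := by
    refine ⟨hk.measurable.indicator measurableSet_Icc, ⟨M, fun x => ?_⟩,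
      indicator_nonneg fun x hx => (hpos x hx).le, ⟨1, hgs⟩, fun h0 => ?_⟩
    · by_cases hx : x ∈ Icc (0:ℝ) 1
      · simpa [g, hx] using (le_abs_self _).trans (hM x hx)
      · simpa [g, hx] using (norm_nonneg _).trans (hM 0 ⟨le_rfl, zero_le_one⟩)
    · rw [mass, integral_congr_ae (ae_restrict_of_ae h0)] at hmass_pos
      simp at hmass_pos
  refine ⟨hstrat, hgs, hstrat.mca_le_half_iff.2 ?_⟩
  rw [hmass, hmoment, ← intervalIntegral.integral_const_mul, ← sub_nonpos,
    ← intervalIntegral.integral_sub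
      ((by fun_prop : Continuous fun x => 2 * (x * k x)).intervalIntegrable 0 1)
      (hk.intervalIntegrable 0 1)]
  refine (intervalIntegral.integral_congr fun x _ => ?_).trans_le hmean
  ring

end Indicator

section Orthogonality

variable {a b : ℝ} {ψ w : ℝ → ℝ}

lemma integral_mul_eq_zero_of_forall_pos_integral_mul_nonpos (hψ : Continuous ψ)
    (hw : Continuous w) (hψ0 : ∫ x in a..b, ψ x = 0) (hw0 : ∫ x in a..b, w x = 0)
    (H : ∀ k : ℝ → ℝ, Continuous k → (∀ x ∈ Icc a b, 0 < k x) →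
      ∫ x in a..b, w x * k x ≤ 0 → ∫ x in a..b, k x * ψ x ≤ 0)
    {h : ℝ → ℝ} (hh : Continuous h) (hwh : ∫ x in a..b, w x * h x = 0) :
    ∫ x in a..b, h x * ψ x = 0 := by
  obtain ⟨M, hM⟩ := isCompact_Icc.exists_bound_of_continuousOn (hh.continuousOn (s := Icc a b))
  have key : ∀ ε : ℝ, |ε| * (|M| + 1) = 1 → ε * ∫ x in a..b, h x * ψ x ≤ 0 := by
    intro ε hε
    have hpos : ∀ x ∈ Icc a b, 0 < 1 + ε * h x := fun x hx => by
      have : |ε * h x| < 1 := by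
        have hhx : |h x| ≤ |M| := (hM x hx).trans (le_abs_self M)
        have hε0 : 0 < |ε| := pos_of_mul_pos_left (hε ▸ one_pos) (by positivity)
        rw [abs_mul, ← hε]
        calc |ε| * |h x| ≤ |ε| * |M| := by gcongr
          _ < |ε| * (|M| + 1) := by gcongr; linarith
      linarith [neg_abs_le (ε * h x)]
    have hmean : ∫ x in a..b, w x * (1 + ε * h x) = 0 := by
      simp only [mul_add, mul_one, mul_left_comm _ ε]
      rw [intervalIntegral.integral_add, intervalIntegral.integral_const_mul, hw0, hwh]
      · ring
      all_goals apply Continuous.intervalIntegrable; fun_prop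
    have hvar := H _ (by fun_prop) hpos hmean.le
    simp only [add_mul, one_mul, mul_assoc] at hvar
    rwa [intervalIntegral.integral_add, intervalIntegral.integral_const_mul, hψ0, zero_add]
      at hvar
    all_goals apply Continuous.intervalIntegrable; fun_prop
  have hδ : |1 / (|M| + 1)| * (|M| + 1) = 1 := by
    rw [abs_of_pos (by positivity)]; field_simp
  have h₁ := key _ hδ
  have h₂ := key (-(1 / (|M| + 1))) (by rwa [abs_neg])
  have : 0 < 1 / (|M| + 1) := by positivity
  nlinarith

lemma exists_eqOn_const_mul_of_forall_orthogonal (hab : a ≤ b) (hψ : Continuous ψ)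
    (hw : Continuous w) (hww : ∫ x in a..b, w x * w x ≠ 0)
    (H : ∀ h : ℝ → ℝ, Continuous h → ∫ x in a..b, w x * h x = 0 → ∫ x in a..b, h x * ψ x = 0) :
    ∃ c : ℝ, EqOn ψ (fun x => c * w x) (Ioc a b) := by
  set c := (∫ x in a..b, w x * ψ x) / ∫ x in a..b, w x * w x
  set h := fun x => ψ x - c * w x
  have hwh : ∫ x in a..b, w x * h x = 0 := by
    simp only [h, mul_sub, mul_left_comm _ c]
    rw [intervalIntegral.integral_sub, intervalIntegral.integral_const_mul, div_mul_cancel₀ _ hww,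
      sub_self]
    all_goals apply Continuous.intervalIntegrable; fun_prop
  have hhh : ∫ x in a..b, h x * h x = 0 := by
    have hsq : ∀ x, h x * h x = h x * ψ x - c * (w x * h x) := fun x => by simp only [h]; ring
    simp only [hsq]
    rw [intervalIntegral.integral_sub, intervalIntegral.integral_const_mul, H h (by fun_prop) hwh,
      hwh, mul_zero, sub_zero]
    all_goals apply Continuous.intervalIntegrable; fun_prop
  have hae := (intervalIntegral.integral_eq_zero_iff_of_le_of_nonneg_ae hab
    (ae_of_all _ fun x => mul_self_nonneg (h x))
    ((by fun_prop : Continuous fun x => h x * h x).intervalIntegrable a b)).1 hhh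
  have hzero := Measure.eqOn_Ioc_of_ae_eq volume hae (by fun_prop) continuousOn_const
  refine ⟨c, fun x hx => ?_⟩
  have := mul_self_eq_zero.1 (hzero hx)
  simp only [h] at this
  linarith

end Orthogonality

lemma integral_two_mul_sub_one : ∫ x in (0:ℝ)..1, (2 * x - 1) = 0 := by
  rw [intervalIntegral.integral_comp_mul_sub (fun x => x) two_ne_zero]
  norm_num

lemma integral_two_mul_sub_one_mul_self :
    ∫ x in (0:ℝ)..1, (2 * x - 1) * (2 * x - 1) = 1 / 3 := by
  rw [intervalIntegral.integral_comp_mul_sub (fun x => x * x) two_ne_zero]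
  simp_rw [← sq]
  norm_num

lemma Admissible.ae_eq_mass_of_forall_wp_nonneg (hf : Admissible f)
    (H : ∀ g, Admissible g → 0 ≤ wp f g) :
    ∀ᵐ x ∂(volume.restrict (Icc (0:ℝ) 1)), f x = mass f := by
  obtain ⟨hfS, hfs, hfm⟩ := hf
  have hfi := hfS.integrable
  have hF := continuous_prim hfi
  set ψ := fun x => 2 * prim f x - mass f
  have hψ : Continuous ψ := by fun_prop
  have htest : ∀ k : ℝ → ℝ, Continuous k → (∀ x ∈ Icc (0:ℝ) 1, 0 < k x) →
      ∫ x in (0:ℝ)..1, (2 * x - 1) * k x ≤ 0 → ∫ x in (0:ℝ)..1, k x * ψ x ≤ 0 := by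
    intro k hk hpos hmean
    have hg := admissible_indicator_Icc hk hpos hmean
    have := H _ hg
    rwa [wp_eq_neg_wp hfi hfs hg.1.integrable hg.2.1, wp_indicator_Icc hfi, neg_nonneg] at this
  have hmean_one : ∫ x in (0:ℝ)..1, (2 * x - 1) * 1 ≤ 0 := by
    simp only [mul_one, integral_two_mul_sub_one, le_rfl]
  have hψ0 : ∫ x in (0:ℝ)..1, ψ x = 0 := by
    have hu := admissible_indicator_Icc continuous_const (fun _ _ => one_pos) hmean_one
    have hwp := wp_eq_neg_wp hfi hfs hu.1.integrable hu.2.1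
    rw [wp_indicator_Icc hfi, wp_eq_of_prim_eq_mul hfi hfs hu.1.integrable hu.2.1
      (prim_eq_mul_of_ae_eq (c := 1) (ae_restrict_of_forall_mem measurableSet_Icc
        fun x hx => indicator_of_mem hx _))] at hwp
    have hmoment := hfS.mca_le_half_iff.1 hfm
    have hle := htest _ continuous_const (fun _ _ => one_pos) hmean_one
    simp only [one_mul] at hwp hle
    linarith
  obtain ⟨c, hc⟩ := exists_eqOn_const_mul_of_forall_orthogonal zero_le_one hψ
    (w := fun x => 2 * x - 1) (by fun_prop) (by norm_num [integral_two_mul_sub_one_mul_self])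
    fun h hh hwh => integral_mul_eq_zero_of_forall_pos_integral_mul_nonpos hψ (by fun_prop) hψ0
      integral_two_mul_sub_one htest hh hwh
  have hc1 : c = mass f := by
    have := hc ⟨zero_lt_one, le_rfl⟩
    simp only [ψ, ← mass_eq_prim_one hfs] at this
    linarith
  refine ae_eq_of_prim_eq_mul hfi.intervalIntegrable fun x hx => ?_
  have := hc ⟨hx.1, hx.2.le⟩
  simp only [ψ, hc1] at this
  linarith

lemma Admissible.forall_wp_nonneg_iff (hf : Admissible f) :
    (∀ g, Admissible g → 0 ≤ wp f g) ↔
      ∃ c : ℝ, 0 < c ∧ ∀ᵐ x ∂(volume.restrict (Icc (0:ℝ) 1)), f x = c :=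
  ⟨fun H => ⟨mass f, hf.1.mass_pos, hf.ae_eq_mass_of_forall_wp_nonneg H⟩,
    fun ⟨_, hc, hfc⟩ _ hg => wp_nonneg_of_ae_eq_const hf.1.integrable hf.2.1 hc.le hfc hg⟩

lemma IsStrategy.const_pos {c : ℝ} (hf : IsStrategy f) (hfs : Function.support f ⊆ Icc 0 1)
    (hfc : ∀ᵐ x ∂(volume.restrict (Icc (0:ℝ) 1)), f x = c) : 0 < c := by
  simpa [mass_eq_prim_one hfs, prim_eq_mul_of_ae_eq hfc 1 ⟨zero_le_one, le_rfl⟩] using hf.mass_pos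

lemma IsStrategy.const_mul {c : ℝ} (hc : 0 < c) (hf : IsStrategy f) :
    IsStrategy fun x => c * f x := by
  obtain ⟨hm, ⟨C, hC⟩, hnn, ⟨R, hR⟩, hne⟩ := hf
  refine ⟨hm.const_mul c, ⟨c * C, fun x => mul_le_mul_of_nonneg_left (hC x) hc.le⟩,
    fun x => mul_nonneg hc.le (hnn x), ⟨R, (Function.support_mul_subset_right _ _).trans hR⟩,
    fun h0 => hne ?_⟩
  filter_upwards [h0] with x hx
  simpa [hc.ne'] using hx

lemma IsStrategy.add (hf : IsStrategy f) (hg : IsStrategy g) : IsStrategy fun x => f x + g x := by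
  obtain ⟨hfm, ⟨Cf, hCf⟩, hfnn, ⟨Rf, hRf⟩, hfne⟩ := hf
  obtain ⟨hgm, ⟨Cg, hCg⟩, hgnn, ⟨Rg, hRg⟩, -⟩ := hg
  refine ⟨hfm.add hgm, ⟨Cf + Cg, fun x => add_le_add (hCf x) (hCg x)⟩,
    fun x => add_nonneg (hfnn x) (hgnn x), ⟨max Rf Rg, ?_⟩, fun h0 => hfne ?_⟩
  · refine (Function.support_add _ _).trans (union_subset ?_ ?_)
    · exact hRf.trans (Icc_subset_Icc_right (le_max_left _ _))
    · exact hRg.trans (Icc_subset_Icc_right (le_max_right _ _))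
  · filter_upwards [h0] with x hx
    have := hfnn x
    have := hgnn x
    simp only [Pi.zero_apply] at hx ⊢
    linarith

lemma mass_const_mul (c : ℝ) (f : ℝ → ℝ) : mass (fun x => c * f x) = c * mass f :=
  integral_const_mul c f

lemma moment_const_mul (c : ℝ) (f : ℝ → ℝ) : moment (fun x => c * f x) = c * moment f := by
  simp only [moment, mul_left_comm _ c, integral_const_mul]

lemma wp_const_mul (c : ℝ) (f g : ℝ → ℝ) : wp (fun x => c * f x) g = c * wp f g := by
  simp only [wp, mul_assoc, integral_const_mul]

lemma mass_add (hf : Integrable f) (hg : Integrable g) :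
    mass (fun x => f x + g x) = mass f + mass g :=
  integral_add hf.integrableOn hg.integrableOn

lemma moment_add (hf : Integrable fun t => t * f t) (hg : Integrable fun t => t * g t) :
    moment (fun x => f x + g x) = moment f + moment g := by
  simp only [moment, mul_add]
  exact integral_add hf.integrableOn hg.integrableOn

lemma Admissible.const_mul {c : ℝ} (hc : 0 < c) (hf : Admissible f) :
    Admissible fun x => c * f x := by
  obtain ⟨hfS, hfs, hfm⟩ := hf
  refine ⟨hfS.const_mul hc, (Function.support_mul_subset_right _ _).trans hfs,
    (hfS.const_mul hc).mca_le_half_iff.2 ?_⟩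
  rw [mass_const_mul, moment_const_mul]
  nlinarith [hfS.mca_le_half_iff.1 hfm]

lemma Admissible.add (hf : Admissible f) (hg : Admissible g) : Admissible fun x => f x + g x := by
  obtain ⟨hfS, hfs, hfm⟩ := hf
  obtain ⟨hgS, hgs, hgm⟩ := hg
  refine ⟨hfS.add hgS, (Function.support_add _ _).trans (union_subset hfs hgs),
    (hfS.add hgS).mca_le_half_iff.2 ?_⟩
  rw [mass_add hfS.integrable hgS.integrable,
    moment_add hfS.integrable_id_mul hgS.integrable_id_mul]
  linarith [hfS.mca_le_half_iff.1 hfm, hgS.mca_le_half_iff.1 hgm]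

lemma Admissible.sum {ι : Type*} {s : Finset ι} (hs : s.Nonempty) {f : ι → ℝ → ℝ}
    (hf : ∀ i ∈ s, Admissible (f i)) : Admissible fun x => ∑ i ∈ s, f i x := by
  induction hs using Finset.Nonempty.cons_induction with
  | singleton a => simpa using hf a (Finset.mem_singleton_self a)
  | cons a s ha hs ih =>
    simp only [Finset.sum_cons]
    exact (hf a (Finset.mem_cons_self a s)).add
      (ih fun i hi => hf i (Finset.mem_cons_of_mem hi))

lemma wp_eq_zero_of_forall_wp_le {S : ℝ → ℝ} (hf : Admissible f)
    (H : ∀ g, Admissible g → wp g S ≤ wp f S) : wp f S = 0 := by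
  have h₁ := H _ (hf.const_mul two_pos)
  have h₂ := H _ (hf.const_mul one_half_pos)
  rw [wp_const_mul] at h₁ h₂
  linarith

lemma eq_div_sub_of_sum_erase_eq {ι : Type*} [Fintype ι] [DecidableEq ι] {a C : ι → ℝ}
    (hcard : Fintype.card ι ≠ 1) (h : ∀ k, ∑ ℓ ∈ Finset.univ.erase k, a ℓ = C k) (k : ι) :
    a k = (∑ j, C j) / (Fintype.card ι - 1) - C k := by
  have h' : ∀ j, ∑ ℓ, a ℓ - a j = C j := fun j => by
    rw [← Finset.sum_erase_eq_sub (Finset.mem_univ j), h j]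
  have htotal : ((Fintype.card ι : ℝ) - 1) * ∑ ℓ, a ℓ = ∑ j, C j := by
    simp only [← h', Finset.sum_sub_distrib, Finset.sum_const, Finset.card_univ, nsmul_eq_mul]
    ring
  have hne : (Fintype.card ι : ℝ) - 1 ≠ 0 := sub_ne_zero.2 (by exact_mod_cast hcard)
  rw [← htotal, mul_div_cancel_left₀ _ hne, ← h' k]
  ring

lemma Admissible.othersSum {ι : Type*} [Fintype ι] [DecidableEq ι] (hι : 2 ≤ Fintype.card ι)
    {f : ι → ℝ → ℝ} (hf : ∀ k, Admissible (f k)) (k : ι) : Admissible (othersSum f k) := by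
  refine Admissible.sum ?_ fun ℓ _ => hf ℓ
  rw [← Finset.card_pos, Finset.card_erase_of_mem (Finset.mem_univ k), Finset.card_univ]
  omega

theorem isEquilibrium_iff {ι : Type*} [Fintype ι] [DecidableEq ι] (hι : 2 ≤ Fintype.card ι)
    {f : ι → ℝ → ℝ} (hf : ∀ k, Admissible (f k)) :
    IsEquilibrium f ↔ ∀ k, ∃ c : ℝ, 0 < c ∧ ∀ᵐ x ∂(volume.restrict (Icc (0:ℝ) 1)), f k x = c := by
  have hS := Admissible.othersSum hι hf
  constructor
  · intro H
    have hconst : ∀ k, ∀ᵐ x ∂(volume.restrict (Icc (0:ℝ) 1)),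
        othersSum f k x = mass (othersSum f k) :=
      fun k => (hS k).ae_eq_mass_of_forall_wp_nonneg fun g hg => by
        have := H k g hg
        rw [wp_eq_zero_of_forall_wp_le (hf k) (H k),
          wp_eq_neg_wp hg.1.integrable hg.2.1 (hS k).1.integrable (hS k).2.1] at this
        linarith
    intro k
    set C := fun j => mass (othersSum f j)
    have hae : ∀ᵐ x ∂(volume.restrict (Icc (0:ℝ) 1)),
        f k x = (∑ j, C j) / (Fintype.card ι - 1) - C k := by
      filter_upwards [ae_all_iff.2 hconst] with x hx
      exact eq_div_sub_of_sum_erase_eq (by omega) hx k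
    exact ⟨_, (hf k).1.const_pos (hf k).2.1 hae, hae⟩
  · intro H k g hg
    choose c hc hfc using H
    have hSc : ∀ᵐ x ∂(volume.restrict (Icc (0:ℝ) 1)),
        othersSum f k x = ∑ ℓ ∈ Finset.univ.erase k, c ℓ := by
      filter_upwards [ae_all_iff.2 hfc] with x hx
      exact Finset.sum_congr rfl fun ℓ _ => hx ℓ
    have h₁ := wp_nonneg_of_ae_eq_const (hS k).1.integrable (hS k).2.1
      (Finset.sum_nonneg fun ℓ _ => (hc ℓ).le) hSc hg
    have h₂ := wp_nonneg_of_ae_eq_const (hf k).1.integrable (hf k).2.1 (hc k).le (hfc k) (hS k)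
    rw [wp_eq_neg_wp (hS k).1.integrable (hS k).2.1 hg.1.integrable hg.2.1] at h₁
    linarith

theorem stmt11 :
    (∀ f : ℝ → ℝ, IsStrategy f → Function.support f ⊆ Icc (0:ℝ) 1 → mca f ≤ 1/2 →
      ((∀ g : ℝ → ℝ, IsStrategy g → Function.support g ⊆ Icc (0:ℝ) 1 → mca g ≤ 1/2 →
          0 ≤ wp f g) ↔
        ∃ c : ℝ, 0 < c ∧ ∀ᵐ x ∂(volume.restrict (Icc (0:ℝ) 1)), f x = c)) ∧
    (∀ n : ℕ, 2 ≤ n → ∀ f : Fin n → ℝ → ℝ,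
      (∀ k, IsStrategy (f k) ∧ Function.support (f k) ⊆ Icc (0:ℝ) 1 ∧ mca (f k) ≤ 1/2) →
      ((∀ k, ∀ g : ℝ → ℝ, IsStrategy g → Function.support g ⊆ Icc (0:ℝ) 1 → mca g ≤ 1/2 →
          wp g (fun x => ∑ ℓ ∈ Finset.univ.erase k, f ℓ x) ≤
            wp (f k) (fun x => ∑ ℓ ∈ Finset.univ.erase k, f ℓ x)) ↔
        (∀ k, ∃ c : ℝ, 0 < c ∧ ∀ᵐ x ∂(volume.restrict (Icc (0:ℝ) 1)), f k x = c))) := by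
  refine ⟨fun f hf hfs hfm => ?_, fun n hn f hf => ?_⟩
  · simpa only [Admissible, and_imp] using Admissible.forall_wp_nonneg_iff ⟨hf, hfs, hfm⟩
  · have := isEquilibrium_iff (by simpa using hn) hf
    simp only [IsEquilibrium, Admissible, and_imp] at this
    exact this
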